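/- arXiv:2510.25986 — 2 statements merged into one kernel-verified Lean document; each statement's English description precedes it below -/
import Mathlib

section
/- Let W be a symmetric n×n real matrix and A an m×n real matrix of full row rank m. If W is positive definite on the kernel of A (that is, hᵀWh > 0 for every nonzero h ∈ ℝⁿ with Ah = 0), then the (n+m)×(n+m) block matrix [[W, Aᵀ], [A, 0]] is invertible. -/
/-!
A vector `(x, y)` in the kernel of the KKT matrix satisfies `A x = 0` and `W x + Aᵀ y = 0`.
Pairing the second equation with `x` gives `xᵀ W x = -(A x)ᵀ y = 0`, so `x = 0` by positivity
of `W` on `ker A`; then `Aᵀ y = 0`, and full row rank of `A` forces `y = 0`.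
-/

open Matrix

theorem Matrix.vecMul_injective_iff_rank_eq_card {K m n : Type*} [Field K] [Fintype m]
    [Fintype n] {A : Matrix m n K} :
    Function.Injective A.vecMul ↔ A.rank = Fintype.card m := by
  rw [vecMul_injective_iff, linearIndependent_iff_card_eq_finrank_span,
    rank_eq_finrank_span_row, eq_comm]
  rfl

theorem Matrix.mulVec_injective_fromBlocks_of_pos_on_ker {𝕜 ι κ : Type*} [Field 𝕜]
    [LinearOrder 𝕜] [IsStrictOrderedRing 𝕜] [Fintype ι] [Fintype κ]
    {W : Matrix ι ι 𝕜} {A : Matrix κ ι 𝕜}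
    (hpos : ∀ h : ι → 𝕜, h ≠ 0 → A *ᵥ h = 0 → 0 < h ⬝ᵥ (W *ᵥ h))
    (hA : Function.Injective A.vecMul) :
    Function.Injective (fromBlocks W Aᵀ A (0 : Matrix κ κ 𝕜)).mulVec := by
  rw [← coe_mulVecLin, ← LinearMap.ker_eq_bot, ker_mulVecLin_eq_bot_iff]
  intro v hv
  obtain ⟨x, y, rfl⟩ : ∃ x y, v = Sum.elim x y := ⟨_, _, (Sum.elim_comp_inl_inr v).symm⟩
  rw [fromBlocks_mulVec, Sum.elim_comp_inl, Sum.elim_comp_inr, zero_mulVec, add_zero,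
    ← Sum.elim_zero_zero, Sum.elim_eq_iff] at hv
  obtain ⟨hstat, hfeas⟩ := hv
  have hcurv : x ⬝ᵥ (W *ᵥ x) = 0 := calc
    x ⬝ᵥ (W *ᵥ x) = x ⬝ᵥ (W *ᵥ x + Aᵀ *ᵥ y) - (A *ᵥ x) ⬝ᵥ y := by
      rw [dotProduct_add, dotProduct_mulVec x Aᵀ, vecMul_transpose, add_sub_cancel_right]
    _ = 0 := by rw [hstat, hfeas, dotProduct_zero, zero_dotProduct, sub_zero]
  have hx : x = 0 := by_contra fun hx ↦ (hpos x hx hfeas).ne' hcurv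
  have hy : y = 0 := by
    rw [hx, mulVec_zero, zero_add, mulVec_transpose] at hstat
    exact hA (hstat.trans (zero_vecMul A).symm)
  rw [hx, hy, Sum.elim_zero_zero]

theorem kkt_matrix_invertible_general {n m : ℕ}
    (W : Matrix (Fin n) (Fin n) ℝ)
    (A : Matrix (Fin m) (Fin n) ℝ) (hA : A.rank = m)
    (hpos : ∀ h : Fin n → ℝ, h ≠ 0 → A *ᵥ h = 0 → 0 < h ⬝ᵥ (W *ᵥ h)) :
    IsUnit (Matrix.fromBlocks W Aᵀ A (0 : Matrix (Fin m) (Fin m) ℝ)) :=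
  mulVec_injective_iff_isUnit.mp <| mulVec_injective_fromBlocks_of_pos_on_ker hpos <|
    vecMul_injective_iff_rank_eq_card.mpr (hA.trans (Fintype.card_fin m).symm)

/-- If `W` is symmetric and positive definite on the kernel of `A`, and `A` has full
row rank `m`, then the KKT matrix `[[W, Aᵀ], [A, 0]]` is invertible. -/
theorem kkt_matrix_invertible {n m : ℕ}
    (W : Matrix (Fin n) (Fin n) ℝ) (hW : W.IsSymm)
    (A : Matrix (Fin m) (Fin n) ℝ) (hA : A.rank = m)
    (hpos : ∀ h : Fin n → ℝ, h ≠ 0 → A *ᵥ h = 0 → 0 < h ⬝ᵥ (W *ᵥ h)) :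
    IsUnit (Matrix.fromBlocks W Aᵀ A (0 : Matrix (Fin m) (Fin m) ℝ)) :=
  kkt_matrix_invertible_general W A hA hpos
end

section
/- Let W be a symmetric n×n real matrix, A an m×n real matrix, and x, ν ∈ ℝⁿ with x ≥ 0 and ν ≥ 0 componentwise. Assume strict complementarity: for every index i, xᵢνᵢ = 0 and xᵢ + νᵢ > 0; let 𝒜 := {i : xᵢ = 0} be the active set. Assume LICQ: the m rows of A together with the standard unit vectors {eᵢ : i ∈ 𝒜} form a linearly independent family in ℝⁿ. Assume the reduced second-order condition: hᵀWh > 0 for every nonzero h ∈ ℝⁿ with Ah = 0 and hᵢ = 0 for all i ∈ 𝒜. Then the (2n+m)×(2n+m) block matrix M = [[W, Aᵀ, −Iₙ], [A, 0, 0], [V, 0, X]], where X = diag(x) and V = diag(ν), is invertible. -/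
open Matrix

/-! If `M (h, λ, w) = 0`, then `A h = 0` and `νᵢ hᵢ + xᵢ wᵢ = 0`. Strict complementarity makes `h`
vanish on the active set and `w` off it, so `h ⬝ᵥ w = 0` and `hᵀ W h = h ⬝ᵥ w - (A h) ⬝ᵥ λ = 0`;
the second-order condition gives `h = 0`. Then `Aᵀ λ = w` is supported on the active set, and
LICQ forces `λ = 0` and `w = 0`. -/

section

variable {R : Type*} [NonUnitalNonAssocSemiring R] [NoZeroDivisors R]

theorem eq_zero_iff_ne_zero_of_mul_eq_zero {a b : R} (hab : a * b = 0) (hsum : a + b ≠ 0) :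
    a = 0 ↔ b ≠ 0 := by
  constructor
  · rintro rfl rfl
    simp at hsum
  · exact (mul_eq_zero.1 hab).resolve_right

variable {ι : Type*} {x ν h w : ι → R}

theorem apply_eq_zero_of_active (hxν : ∀ i, x i = 0 ↔ ν i ≠ 0) (hc : ν * h + x * w = 0) {i : ι}
    (hi : x i = 0) : h i = 0 := by
  have hci : ν i * h i + x i * w i = 0 := congrFun hc i
  rw [hi, zero_mul, add_zero] at hci
  exact (mul_eq_zero.1 hci).resolve_left ((hxν i).1 hi)

theorem apply_eq_zero_of_inactive (hxν : ∀ i, x i = 0 ↔ ν i ≠ 0) (hc : ν * h + x * w = 0) {i : ι}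
    (hi : x i ≠ 0) : w i = 0 := by
  have hci : ν i * h i + x i * w i = 0 := congrFun hc i
  rw [not_not.1 (mt (hxν i).2 hi), zero_mul, zero_add] at hci
  exact (mul_eq_zero.1 hci).resolve_left hi

end

section

variable {K : Type*} [Field K] {ι κ : Type*} [Fintype ι] [Fintype κ] [DecidableEq ι]

def kktMatrix (W : Matrix ι ι K) (A : Matrix κ ι K) (x ν : ι → K) :
    Matrix (ι ⊕ κ ⊕ ι) (ι ⊕ κ ⊕ ι) K :=
  fromBlocks W (fromCols Aᵀ (-1)) (fromRows A (diagonal ν)) (fromBlocks 0 0 0 (diagonal x))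

theorem kktMatrix_mulVec (W : Matrix ι ι K) (A : Matrix κ ι K) (x ν h w : ι → K) (l : κ → K) :
    kktMatrix W A x ν *ᵥ (h ⊕ᵥ (l ⊕ᵥ w)) =
      (W *ᵥ h + Aᵀ *ᵥ l - w) ⊕ᵥ ((A *ᵥ h) ⊕ᵥ (ν * h + x * w)) := by
  ext (i | k | i) <;>
    simp [kktMatrix, fromBlocks_mulVec, fromRows_mulVec, mulVec_diagonal, neg_mulVec,
      sub_eq_add_neg, add_assoc]

theorem sum_smul_single_subtype_of_support {p : ι → Prop} [Fintype {i // p i}] (w : ι → K)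
    (hw : ∀ i, ¬ p i → w i = 0) :
    ∑ i : {i // p i}, w i • (Pi.single (i : ι) 1 : ι → K) = w := by
  classical
  simp_rw [← Pi.single_smul', smul_eq_mul, mul_one]
  rw [← Finset.sum_subtype (Finset.univ.filter p) (by simp) fun i ↦ Pi.single i (w i),
    Finset.sum_filter_of_ne, Finset.univ_sum_single]
  intro i _ hi
  by_contra hp
  simp [hw i hp] at hi

theorem eq_zero_of_transpose_mulVec_eq_of_linearIndependent {p : ι → Prop} [Fintype {i // p i}]
    {A : Matrix κ ι K}
    (hA : LinearIndependent K
      (Sum.elim (fun k ↦ A k) fun i : {i // p i} ↦ (Pi.single (i : ι) 1 : ι → K)))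
    {l : κ → K} {w : ι → K} (hw : ∀ i, ¬ p i → w i = 0) (hlw : Aᵀ *ᵥ l = w) : l = 0 ∧ w = 0 := by
  have hcoeff := Fintype.linearIndependent_iff.1 hA (Sum.elim l fun i ↦ -w i) <| by
    simp only [Fintype.sum_sum_type, Sum.elim_inl, Sum.elim_inr, neg_smul, Finset.sum_neg_distrib]
    rw [← vecMul_eq_sum, sum_smul_single_subtype_of_support w hw, ← mulVec_transpose, hlw,
      add_neg_cancel]
  refine ⟨funext fun k ↦ hcoeff (.inl k), funext fun i ↦ ?_⟩
  by_cases hi : p i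
  · simpa using hcoeff (.inr ⟨i, hi⟩)
  · exact hw i hi

theorem kktMatrix_mulVec_eq_zero {W : Matrix ι ι K} {A : Matrix κ ι K} {x ν : ι → K}
    [Fintype {i // x i = 0}] (hxν : ∀ i, x i = 0 ↔ ν i ≠ 0)
    (hLICQ : LinearIndependent K
      (Sum.elim (fun k ↦ A k) fun i : {i // x i = 0} ↦ (Pi.single (i : ι) 1 : ι → K)))
    (hSOSC : ∀ h, h ≠ 0 → A *ᵥ h = 0 → (∀ i, x i = 0 → h i = 0) → h ⬝ᵥ (W *ᵥ h) ≠ 0)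
    {v : ι ⊕ κ ⊕ ι → K} (hv : kktMatrix W A x ν *ᵥ v = 0) : v = 0 := by
  obtain ⟨h, l, w, rfl⟩ : ∃ h l w, v = h ⊕ᵥ (l ⊕ᵥ w) :=
    ⟨v ∘ .inl, v ∘ .inr ∘ .inl, v ∘ .inr ∘ .inr, by ext (i | k | i) <;> rfl⟩
  rw [kktMatrix_mulVec] at hv
  simp only [← Sum.elim_zero_zero, Sum.elim_eq_iff] at hv
  obtain ⟨hstat, hAh, hc⟩ := hv
  have hh_active : ∀ i, x i = 0 → h i = 0 := fun i ↦ apply_eq_zero_of_active hxν hc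
  have hw_inactive : ∀ i, x i ≠ 0 → w i = 0 := fun i ↦ apply_eq_zero_of_inactive hxν hc
  have hhw : h ⬝ᵥ w = 0 := Finset.sum_eq_zero fun i _ ↦ by
    by_cases hi : x i = 0
    · simp [hh_active i hi]
    · simp [hw_inactive i hi]
  have hcurv : h ⬝ᵥ (W *ᵥ h) = 0 := calc
    h ⬝ᵥ (W *ᵥ h) = h ⬝ᵥ w - h ⬝ᵥ (Aᵀ *ᵥ l) := by
      rw [← dotProduct_sub, ← sub_eq_zero.1 hstat, add_sub_cancel_right]
    _ = h ⬝ᵥ w - (A *ᵥ h) ⬝ᵥ l := by rw [dotProduct_mulVec, vecMul_transpose]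
    _ = 0 := by rw [hhw, hAh, zero_dotProduct, sub_zero]
  obtain rfl : h = 0 := by_contra fun hne ↦ hSOSC h hne hAh hh_active hcurv
  obtain ⟨rfl, rfl⟩ := eq_zero_of_transpose_mulVec_eq_of_linearIndependent hLICQ hw_inactive
    (by simpa [sub_eq_zero] using hstat)
  ext (i | k | i) <;> rfl

theorem isUnit_kktMatrix [DecidableEq κ] {W : Matrix ι ι K} {A : Matrix κ ι K} {x ν : ι → K}
    [Fintype {i // x i = 0}] (hxν : ∀ i, x i = 0 ↔ ν i ≠ 0)
    (hLICQ : LinearIndependent K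
      (Sum.elim (fun k ↦ A k) fun i : {i // x i = 0} ↦ (Pi.single (i : ι) 1 : ι → K)))
    (hSOSC : ∀ h, h ≠ 0 → A *ᵥ h = 0 → (∀ i, x i = 0 → h i = 0) → h ⬝ᵥ (W *ᵥ h) ≠ 0) :
    IsUnit (kktMatrix W A x ν) :=
  mulVec_injective_iff_isUnit.1 fun u v huv ↦ sub_eq_zero.1 <|
    kktMatrix_mulVec_eq_zero hxν hLICQ hSOSC (by rw [mulVec_sub, huv, sub_self])

end

theorem kkt_jacobian_invertible_general {n m : ℕ}
    (W : Matrix (Fin n) (Fin n) ℝ)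
    (A : Matrix (Fin m) (Fin n) ℝ)
    (x ν : Fin n → ℝ)
    (hcomp : ∀ i, x i * ν i = 0)
    (hstrict : ∀ i, 0 < x i + ν i)
    (hLICQ : LinearIndependent ℝ
      (Sum.elim (fun k : Fin m => A k)
        (fun i : {i : Fin n // x i = 0} => (Pi.single (i : Fin n) 1 : Fin n → ℝ))))
    (hSOSC : ∀ h : Fin n → ℝ, h ≠ 0 → A *ᵥ h = 0 → (∀ i, x i = 0 → h i = 0) →
      0 < h ⬝ᵥ (W *ᵥ h)) :
    IsUnit
      (Matrix.fromBlocks W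
        (Matrix.fromCols Aᵀ (-(1 : Matrix (Fin n) (Fin n) ℝ)))
        (Matrix.fromRows A (Matrix.diagonal ν))
        (Matrix.fromBlocks 0 0 0 (Matrix.diagonal x))) :=
  isUnit_kktMatrix (fun i ↦ eq_zero_iff_ne_zero_of_mul_eq_zero (hcomp i) (hstrict i).ne') hLICQ
    fun h hne hAh hactive ↦ (hSOSC h hne hAh hactive).ne'

/-- Under strict complementarity, LICQ and the reduced second-order condition, the
Jacobian `M = [[W, Aᵀ, -I], [A, 0, 0], [V, 0, X]]` of the KKT residual is invertible,
where `X = diag(x)` and `V = diag(ν)`. -/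
theorem kkt_jacobian_invertible {n m : ℕ}
    (W : Matrix (Fin n) (Fin n) ℝ) (hW : W.IsSymm)
    (A : Matrix (Fin m) (Fin n) ℝ)
    (x ν : Fin n → ℝ)
    (hx : ∀ i, 0 ≤ x i) (hν : ∀ i, 0 ≤ ν i)
    (hcomp : ∀ i, x i * ν i = 0)
    (hstrict : ∀ i, 0 < x i + ν i)
    (hLICQ : LinearIndependent ℝ
      (Sum.elim (fun k : Fin m => A k)
        (fun i : {i : Fin n // x i = 0} => (Pi.single (i : Fin n) 1 : Fin n → ℝ))))
    (hSOSC : ∀ h : Fin n → ℝ, h ≠ 0 → A *ᵥ h = 0 → (∀ i, x i = 0 → h i = 0) →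
      0 < h ⬝ᵥ (W *ᵥ h)) :
    IsUnit
      (Matrix.fromBlocks W
        (Matrix.fromCols Aᵀ (-(1 : Matrix (Fin n) (Fin n) ℝ)))
        (Matrix.fromRows A (Matrix.diagonal ν))
        (Matrix.fromBlocks 0 0 0 (Matrix.diagonal x))) :=
  kkt_jacobian_invertible_general W A x ν hcomp hstrict hLICQ hSOSC
end
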